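/- Prescribed final position (Courant–Robbins 1948 form, strengthened): for every g > 0, every continuous u : ℝ → ℝ, every T > 0, and every y ∈ (0, π), there exist φ ∈ (0, π) and a solution α with α(0) = φ and α'(0) = 0 such that α(t) ∈ (0, π) for all t ∈ [0, T] and α(T) = y. In particular (y = π/2), there is an initial position for which the rod never touches the floor during [0, T] and is exactly vertical at the final moment T. -/

import Mathlib

/-- `α` is a solution of the inverted-pendulum equation
`α'' t = -g * cos (α t) + u t * sin (α t)`. -/
def IsPendulumSolution (g : ℝ) (u : ℝ → ℝ) (α : ℝ → ℝ) : Prop :=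
  ContDiff ℝ 2 α ∧
    ∀ t : ℝ, deriv (deriv α) t = -g * Real.cos (α t) + u t * Real.sin (α t)

/-!
Shooting in the initial angle. Let `X φ` be the solution released at rest from the angle `φ`;
by Grönwall it depends Lipschitz-continuously on `φ`, uniformly on `[0, T]`. Call `φ` *low* if
`X φ` dips strictly below `0` within `[0, T]` before reaching `π`, or stays below `π` and ends below
`y`, and *high* in the mirror situation. Low and high angles form disjoint open sets. A solution
that touches the floor must cross it, because its acceleration there is `-g < 0`; so an angle that
is neither low nor high keeps the rod in `(0, π)` on `[0, T]` and ends exactly at `y`. Close to the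
floor the rod accelerates downwards at rate at least `g / 4`, so small angles are low, and by the
symmetry `α ↦ π - α`, `u ↦ -u` angles close to `π` are high. Connectedness of `[φ₀, π - φ₀]` then
yields an angle that is neither.
-/

open Set Filter Topology Real
open scoped NNReal

theorem exists_hasDerivWithinAt_Icc_of_norm_le {E : Type*} [NormedAddCommGroup E]
    [NormedSpace ℝ E] [CompleteSpace E] {f : ℝ → E → E} {a b t₀ : ℝ} {K L : ℝ≥0}
    (ht₀ : t₀ ∈ Icc a b) (hlip : ∀ t ∈ Icc a b, LipschitzWith K (f t))
    (hcont : ∀ x, ContinuousOn (f · x) (Icc a b)) (hbdd : ∀ t ∈ Icc a b, ∀ x, ‖f t x‖ ≤ L)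
    (x₀ : E) :
    ∃ α : ℝ → E, α t₀ = x₀ ∧ ∀ t ∈ Icc a b, HasDerivWithinAt α (f t (α t)) (Icc a b) t := by
  have hpl : IsPicardLindelof f ⟨t₀, ht₀⟩ x₀ (L * (b - a).toNNReal) 0 L K :=
    { lipschitzOnWith := fun t ht => (hlip t ht).lipschitzOnWith
      continuousOn := fun x _ => hcont x
      norm_le := fun t ht x _ => hbdd t ht x
      mul_max_le := by
        have hab : a ≤ b := ht₀.1.trans ht₀.2
        simp only [NNReal.coe_mul, Real.coe_toNNReal _ (sub_nonneg.2 hab), NNReal.coe_zero,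
          sub_zero]
        exact mul_le_mul_of_nonneg_left (max_le (by linarith [ht₀.1]) (by linarith [ht₀.2]))
          L.2 }
  exact hpl.exists_eq_forall_mem_Icc_hasDerivWithinAt₀

theorem exists_forall_hasDerivAt_of_forall_Ioo {E : Type*} [NormedAddCommGroup E]
    [NormedSpace ℝ E] {f : ℝ → E → E} {x₀ : E}
    (hlip : ∀ r, ∃ K, ∀ t ∈ Ioo (-r) r, LipschitzWith K (f t))
    (hsol : ∀ r, ∃ α : ℝ → E, α 0 = x₀ ∧ ∀ t ∈ Ioo (-r) r, HasDerivAt α (f t (α t)) t) :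
    ∃ α : ℝ → E, α 0 = x₀ ∧ ∀ t, HasDerivAt α (f t (α t)) t := by
  choose sol hsol0 hsol using hsol
  have hagree : ∀ r r' t, |t| < r → |t| < r' → sol r t = sol r' t := by
    intro r r' t hr hr'
    obtain ⟨K, hK⟩ := hlip (min r r')
    have hsub : ∀ ρ ≥ min r r', ∀ s ∈ Ioo (-min r r') (min r r'),
        HasDerivAt (sol ρ) (f s (sol ρ s)) s ∧ sol ρ s ∈ univ :=
      fun ρ hρ s hs => ⟨hsol ρ s ⟨by linarith [hs.1], by linarith [hs.2]⟩, trivial⟩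
    have hmin : |t| < min r r' := lt_min hr hr'
    exact ODE_solution_unique_of_mem_Ioo (s := fun _ => univ) (t₀ := 0)
      (fun s hs => (hK s hs).lipschitzOnWith)
      ⟨by linarith [abs_nonneg t], by linarith [abs_nonneg t]⟩ (hsub r (min_le_left _ _))
      (hsub r' (min_le_right _ _)) (by rw [hsol0, hsol0]) (abs_lt.1 hmin)
  refine ⟨fun t => sol (|t| + 1) t, hsol0 _, fun t => ?_⟩
  have hloc : (fun s => sol (|s| + 1) s) =ᶠ[𝓝 t] sol (|t| + 1) := by
    filter_upwards [Ioo_mem_nhds (abs_lt.1 (lt_add_one |t|)).1 (abs_lt.1 (lt_add_one |t|)).2]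
      with s hs
    exact hagree _ _ s (lt_add_one _) (abs_lt.2 hs)
  show HasDerivAt _ (f t (sol (|t| + 1) t)) t
  exact (hsol _ t (abs_lt.1 (lt_add_one |t|))).congr_of_eventuallyEq hloc

lemma exists_nnnorm_le_of_continuous {E : Type*} [SeminormedAddCommGroup E] {f : ℝ → E}
    (hf : Continuous f) (a b : ℝ) : ∃ M : ℝ≥0, ∀ t ∈ Icc a b, ‖f t‖₊ ≤ M := by
  obtain ⟨M, hM⟩ := (isCompact_Icc.image_of_continuousOn hf.nnnorm.continuousOn).bddAbove
  exact ⟨M, fun t ht => hM (mem_image_of_mem _ ht)⟩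

/-- If `f ≥ 0` near `x₀`, then `x₀` is a local minimum, so `f'(x₀) = 0`; as `f''(x₀) < 0`, `f' < 0`
just to the right of `x₀`, contradicting the mean value theorem. -/
lemma frequently_neg_of_eq_zero {f f' : ℝ → ℝ} {x₀ a : ℝ} (hf : ∀ t, HasDerivAt f (f' t) t)
    (hf' : HasDerivAt f' a x₀) (ha : a < 0) (h0 : f x₀ = 0) : ∃ᶠ t in 𝓝 x₀, f t < 0 := by
  by_contra hnonneg
  simp only [not_frequently, not_lt] at hnonneg
  have hcrit : f' x₀ = 0 :=
    IsLocalMin.hasDerivAt_eq_zero (hnonneg.mono fun t ht => h0 ▸ ht) (hf x₀)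
  have hdec : ∀ᶠ t in 𝓝[>] x₀, f' t < 0 := by
    filter_upwards [nhdsWithin_le_nhds (eventually_nhdsWithin_sign_eq_of_deriv_neg
      (hf'.deriv ▸ ha) hcrit), self_mem_nhdsWithin] with t hsign (ht : x₀ < t)
    rwa [sign_neg (sub_neg.2 ht), sign_eq_neg_one_iff] at hsign
  obtain ⟨b, hb, hsub⟩ := mem_nhdsGT_iff_exists_Ioo_subset.1
    (hdec.and (nhdsWithin_le_nhds hnonneg))
  have hm : (x₀ + b) / 2 ∈ Ioo x₀ b := ⟨by linarith [mem_Ioi.1 hb], by linarith [mem_Ioi.1 hb]⟩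
  obtain ⟨c, hc, hslope⟩ := exists_hasDerivAt_eq_slope f f' hm.1
    (HasDerivAt.continuousOn fun t _ => hf t) fun t _ => hf t
  have hfc := (hsub ⟨hc.1, hc.2.trans hm.2⟩).1
  rw [hslope, h0, sub_zero] at hfc
  exact (div_nonneg (hsub hm).2 (sub_nonneg.2 hm.1.le)).not_gt hfc

lemma le_sub_of_deriv_deriv_le {x x' x'' : ℝ → ℝ} {κ σ : ℝ} (hx : ∀ t, HasDerivAt x (x' t) t)
    (hx' : ∀ t, HasDerivAt x' (x'' t) t) (h0 : x' 0 = 0) (hσ : 0 ≤ σ)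
    (hκ : ∀ t ∈ Ico 0 σ, x'' t ≤ -κ) : x σ ≤ x 0 - κ * σ ^ 2 / 2 := by
  have hvel : ∀ t ∈ Icc 0 σ, x' t ≤ -κ * t :=
    image_le_of_deriv_right_le_deriv_boundary (HasDerivAt.continuousOn fun t _ => hx' t)
      (fun t _ => (hx' t).hasDerivWithinAt) (by simp [h0]) (by fun_prop)
      (fun t _ => ((hasDerivAt_id t).const_mul (-κ)).hasDerivWithinAt) (by simpa using hκ)
  have hB : ∀ t, HasDerivAt (fun t => x 0 - κ * t ^ 2 / 2) (-κ * t) t := fun t =>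
    (((hasDerivAt_pow 2 t).const_mul κ).div_const 2).const_sub (x 0) |>.congr_deriv (by simp; ring)
  exact image_le_of_deriv_right_le_deriv_boundary (HasDerivAt.continuousOn fun t _ => hx t)
    (fun t _ => (hx t).hasDerivWithinAt) (by simp) (HasDerivAt.continuousOn fun t _ => hB t)
    (fun t _ => (hB t).hasDerivWithinAt) (fun t ht => hvel t (Ico_subset_Icc_self ht))
    (right_mem_Icc.2 hσ)

lemma exists_first_exit_Ioo {x : ℝ → ℝ} (hx : Continuous x) {a b : ℝ} (T : ℝ)
    (h0 : x 0 ∈ Ioo a b) :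
    (∀ t ∈ Icc 0 T, x t ∈ Ioo a b) ∨
      ∃ σ ∈ Ioc 0 T, (x σ = a ∨ x σ = b) ∧ ∀ t ∈ Ico 0 σ, x t ∈ Ioo a b := by
  by_cases hstay : ∀ t ∈ Icc 0 T, x t ∈ Ioo a b
  · exact Or.inl hstay
  push Not at hstay
  set S := {t ∈ Icc 0 T | x t ∉ Ioo a b}
  have hbdd : BddBelow S := ⟨0, fun t ht => ht.1.1⟩
  have hσ : sInf S ∈ S :=
    (isClosed_Icc.inter (isOpen_Ioo.preimage hx).isClosed_compl).csInf_mem hstay hbdd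
  have hbefore : ∀ t ∈ Ico 0 (sInf S), x t ∈ Ioo a b := fun t ht => by
    by_contra hxt
    exact (csInf_le hbdd ⟨⟨ht.1, ht.2.le.trans hσ.1.2⟩, hxt⟩).not_gt ht.2
  have hpos : 0 < sInf S := hσ.1.1.lt_of_ne fun h => hσ.2 (h ▸ h0)
  have hclosed : x (sInf S) ∈ Icc a b := by
    have hcl : sInf S ∈ closure (Ico 0 (sInf S)) := by
      rw [closure_Ico hpos.ne]; exact right_mem_Icc.2 hpos.le
    simpa [isClosed_Icc.closure_eq] using
      map_mem_closure hx hcl fun t ht => Ioo_subset_Icc_self (hbefore t ht)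
  refine Or.inr ⟨sInf S, ⟨hpos, hσ.1.2⟩, ?_, hbefore⟩
  by_contra hne
  push Not at hne
  exact hσ.2 ⟨hclosed.1.lt_of_ne (Ne.symm hne.1), hclosed.2.lt_of_ne hne.2⟩

/-- The inequalities are strict so that this is an open condition on the initial angle. -/
def ExitsLow (T y : ℝ) (x : ℝ → ℝ) : Prop :=
  ∃ t ∈ Icc 0 T, (x t < 0 ∨ t = T ∧ x T < y) ∧ ∀ s ∈ Icc 0 t, x s < π

def ExitsHigh (T y : ℝ) (x : ℝ → ℝ) : Prop :=
  ExitsLow T (π - y) (fun t => π - x t)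

lemma ExitsLow.not_exitsHigh {T y : ℝ} {x : ℝ → ℝ} (hlow : ExitsLow T y x) :
    ¬ ExitsHigh T y x := by
  obtain ⟨t₁, ht₁, hlow₁, hbelow₁⟩ := hlow
  rintro ⟨t₂, ht₂, hhigh₂, habove₂⟩
  simp only [sub_lt_self_iff, sub_neg, sub_lt_sub_iff_left] at hhigh₂ habove₂
  rcases le_total t₁ t₂ with h | h
  · have hpos := habove₂ t₁ ⟨ht₁.1, h⟩
    rcases hlow₁ with h1 | ⟨rfl, h1⟩
    · linarith
    · obtain rfl : t₂ = t₁ := le_antisymm ht₂.2 h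
      have := hbelow₁ t₂ ⟨ht₂.1, le_rfl⟩
      rcases hhigh₂ with h2 | ⟨-, h2⟩ <;> linarith
  · have hlt := hbelow₁ t₂ ⟨ht₂.1, h⟩
    rcases hhigh₂ with h2 | ⟨rfl, h2⟩
    · linarith
    · obtain rfl : t₁ = t₂ := le_antisymm ht₁.2 h
      have := habove₂ t₁ ⟨ht₁.1, le_rfl⟩
      rcases hlow₁ with h1 | ⟨-, h1⟩ <;> linarith

section Openness

variable {X : ℝ → ℝ → ℝ} {c : ℝ≥0} {T : ℝ}

lemma eventually_forall_Icc_lt (hX : ∀ φ, Continuous (X φ))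
    (hc : ∀ t ∈ Icc 0 T, LipschitzWith c (X · t)) {φ t b : ℝ} (ht : t ≤ T)
    (hφ : ∀ s ∈ Icc 0 t, X φ s < b) : ∀ᶠ ψ in 𝓝 φ, ∀ s ∈ Icc 0 t, X ψ s < b := by
  rcases (Icc (0 : ℝ) t).eq_empty_or_nonempty with hempty | hne
  · simp [hempty]
  obtain ⟨s₀, hs₀, hmax⟩ := isCompact_Icc.exists_isMaxOn hne (hX φ).continuousOn
  have hgap : 0 < b - X φ s₀ := sub_pos.2 (hφ s₀ hs₀)
  filter_upwards [Metric.ball_mem_nhds φ (div_pos hgap (by positivity : (0 : ℝ) < c + 1))]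
    with ψ hψ s hs
  have hlip := (hc s ⟨hs.1, hs.2.trans ht⟩).dist_le_mul ψ φ
  rw [Real.dist_eq] at hlip
  rw [Metric.mem_ball, lt_div_iff₀ (by positivity)] at hψ
  have : X φ s ≤ X φ s₀ := hmax hs
  nlinarith [le_abs_self (X ψ s - X φ s), dist_nonneg (x := ψ) (y := φ)]

lemma isOpen_setOf_exitsLow (hX : ∀ φ, Continuous (X φ))
    (hc : ∀ t ∈ Icc 0 T, LipschitzWith c (X · t)) (y : ℝ) :
    IsOpen {φ | ExitsLow T y (X φ)} := by
  rw [isOpen_iff_mem_nhds]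
  rintro φ ⟨t, ht, hcross, hbelow⟩
  have hcont : ∀ s ∈ Icc 0 T, ContinuousAt (X · s) φ := fun s hs =>
    (hc s hs).continuous.continuousAt
  have hcross' : ∀ᶠ ψ in 𝓝 φ, X ψ t < 0 ∨ t = T ∧ X ψ T < y := by
    rcases hcross with h | ⟨rfl, h⟩
    · exact ((hcont t ht).eventually_lt continuousAt_const h).mono fun _ => Or.inl
    · exact ((hcont t ht).eventually_lt continuousAt_const h).mono fun _ h => Or.inr ⟨rfl, h⟩
  filter_upwards [hcross', eventually_forall_Icc_lt hX hc ht.2 hbelow] with ψ h1 h2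
  exact ⟨t, ht, h1, h2⟩

lemma isOpen_setOf_exitsHigh (hX : ∀ φ, Continuous (X φ))
    (hc : ∀ t ∈ Icc 0 T, LipschitzWith c (X · t)) (y : ℝ) :
    IsOpen {φ | ExitsHigh T y (X φ)} :=
  isOpen_setOf_exitsLow (X := fun φ t => π - X φ t) (fun φ => continuous_const.sub (hX φ))
    (fun t ht => LipschitzWith.of_dist_le_mul fun φ ψ => by
      rw [dist_sub_left]; exact (hc t ht).dist_le_mul φ ψ) (π - y)

lemma exists_mem_Icc_not_exitsLow_not_exitsHigh (hX : ∀ φ, Continuous (X φ))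
    (hc : ∀ t ∈ Icc 0 T, LipschitzWith c (X · t)) {y a b : ℝ} (hab : a ≤ b)
    (ha : ExitsLow T y (X a)) (hb : ExitsHigh T y (X b)) :
    ∃ φ ∈ Icc a b, ¬ ExitsLow T y (X φ) ∧ ¬ ExitsHigh T y (X φ) := by
  by_contra! hcover
  obtain ⟨φ, -, hlow, hhigh⟩ := isPreconnected_Icc _ _ (isOpen_setOf_exitsLow hX hc y)
    (isOpen_setOf_exitsHigh hX hc y) (fun φ hφ => or_iff_not_imp_left.2 (hcover φ hφ))
    ⟨a, left_mem_Icc.2 hab, ha⟩ ⟨b, right_mem_Icc.2 hab, hb⟩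
  exact hlow.not_exitsHigh hhigh

end Openness

section Pendulum

variable {g : ℝ} {u : ℝ → ℝ}

noncomputable def pendulumAccel (g : ℝ) (u : ℝ → ℝ) (t θ : ℝ) : ℝ :=
  -g * cos θ + u t * sin θ

noncomputable def pendulumField (g : ℝ) (u : ℝ → ℝ) (t : ℝ) (p : ℝ × ℝ) : ℝ × ℝ :=
  (p.2, pendulumAccel g u t p.1)

lemma lipschitzWith_pendulumAccel {M : ℝ≥0} {t : ℝ} (hM : ‖u t‖₊ ≤ M) :
    LipschitzWith (‖g‖₊ + M) (pendulumAccel g u t) := by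
  have hcos := (lipschitzWith_smul (-g)).comp lipschitzWith_cos
  have hsin := (lipschitzWith_smul (u t)).comp lipschitzWith_sin
  show LipschitzWith _ fun θ => -g * cos θ + u t * sin θ
  simpa [Function.comp_def] using (hcos.add hsin).weaken (by simpa using hM)

lemma abs_pendulumAccel_le (g : ℝ) (u : ℝ → ℝ) (t θ : ℝ) :
    |pendulumAccel g u t θ| ≤ |g| + |u t| := by
  unfold pendulumAccel
  calc |-g * cos θ + u t * sin θ| ≤ |g| * |cos θ| + |u t| * |sin θ| := by
        simpa [abs_mul] using abs_add_le (-g * cos θ) (u t * sin θ)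
    _ ≤ |g| * 1 + |u t| * 1 := by
        gcongr
        exacts [abs_cos_le_one θ, abs_sin_le_one θ]
    _ = |g| + |u t| := by ring

lemma continuous_pendulumAccel (hu : Continuous u) (θ : ℝ) :
    Continuous (pendulumAccel g u · θ) := by
  unfold pendulumAccel; fun_prop

lemma lipschitzWith_pendulumField {M : ℝ≥0} {t : ℝ} (hM : ‖u t‖₊ ≤ M) :
    LipschitzWith (max 1 (‖g‖₊ + M)) (pendulumField g u t) := by
  have hacc :=
    (lipschitzWith_pendulumAccel (g := g) hM).comp (LipschitzWith.prod_fst (α := ℝ) (β := ℝ))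
  exact (LipschitzWith.prod_snd.prodMk hacc).weaken (by simp)

lemma exists_lipschitzWith_pendulumField (hu : Continuous u) (a b : ℝ) :
    ∃ K, ∀ t ∈ Icc a b, LipschitzWith K (pendulumField g u t) := by
  obtain ⟨M, hM⟩ := exists_nnnorm_le_of_continuous hu a b
  exact ⟨_, fun t ht => lipschitzWith_pendulumField (hM t ht)⟩

noncomputable def clampedPendulumField (g : ℝ) (u : ℝ → ℝ) (R t : ℝ) (p : ℝ × ℝ) : ℝ × ℝ :=
  (max (-R) (min R p.2), pendulumAccel g u t p.1)

lemma lipschitzWith_clampedPendulumField {M : ℝ≥0} {t : ℝ} (hM : ‖u t‖₊ ≤ M) (R : ℝ) :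
    LipschitzWith (max 1 (‖g‖₊ + M)) (clampedPendulumField g u R t) := by
  have hacc :=
    (lipschitzWith_pendulumAccel (g := g) hM).comp (LipschitzWith.prod_fst (α := ℝ) (β := ℝ))
  exact (((LipschitzWith.prod_snd.const_min R).const_max (-R)).prodMk hacc).weaken (by simp)

lemma norm_clampedPendulumField_le {R : ℝ} (hR : 0 ≤ R) (t : ℝ) (p : ℝ × ℝ) :
    ‖clampedPendulumField g u R t p‖ ≤ max R (|g| + |u t|) := by
  simp only [clampedPendulumField, Prod.norm_def, Real.norm_eq_abs]
  exact max_le_max (abs_le.2 ⟨le_max_left _ _, max_le (by linarith) (min_le_left _ _)⟩)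
    (abs_pendulumAccel_le g u t _)

lemma clampedPendulumField_eq {R t : ℝ} {p : ℝ × ℝ} (hp : |p.2| ≤ R) :
    clampedPendulumField g u R t p = pendulumField g u t p := by
  obtain ⟨h1, h2⟩ := abs_le.1 hp
  simp only [clampedPendulumField, pendulumField, min_eq_right h2, max_eq_right h1]

/-- On `[-r, r]` the acceleration is bounded by some `C`, so with `R = |x₀.2| + C r` the clamp of
the velocity to `[-R, R]` is never active, while the clamped field is bounded. -/
lemma exists_pendulumField_solution_Ioo (hu : Continuous u) (x₀ : ℝ × ℝ) (r : ℝ) :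
    ∃ p : ℝ → ℝ × ℝ, p 0 = x₀ ∧ ∀ t ∈ Ioo (-r) r, HasDerivAt p (pendulumField g u t (p t)) t := by
  set I := Icc (-|r|) |r|
  have h0I : (0 : ℝ) ∈ I := ⟨neg_nonpos.2 (abs_nonneg r), abs_nonneg r⟩
  obtain ⟨M, hM⟩ := exists_nnnorm_le_of_continuous hu (-|r|) |r|
  set C : ℝ := |g| + M
  have hC : ∀ t ∈ I, |g| + |u t| ≤ C := fun t ht => by
    have : |u t| ≤ M := by exact_mod_cast hM t ht
    linarith
  set R : ℝ := |x₀.2| + C * |r|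
  have hR : 0 ≤ R := by positivity
  obtain ⟨p, hp0, hp⟩ := exists_hasDerivWithinAt_Icc_of_norm_le (f := clampedPendulumField g u R)
    (L := (max R C).toNNReal) h0I
    (fun t ht => lipschitzWith_clampedPendulumField (hM t ht) R)
    (fun q => (continuous_const.prodMk (continuous_pendulumAccel hu q.1)).continuousOn)
    (fun t ht q => (norm_clampedPendulumField_le hR t q).trans
      (by rw [Real.coe_toNNReal _ (hR.trans (le_max_left _ _))]
          exact max_le_max le_rfl (hC t ht)))
    x₀
  have hvel : ∀ t ∈ I, |(p t).2| ≤ R := fun t ht => by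
    have hd : ∀ s ∈ I, HasDerivWithinAt (fun s => (p s).2) (pendulumAccel g u s (p s).1) I s :=
      fun s hs => (hasFDerivAt_snd (𝕜 := ℝ) (E := ℝ) (F := ℝ)).comp_hasDerivWithinAt s (hp s hs)
    have hmvt := (convex_Icc _ _).norm_image_sub_le_of_norm_hasDerivWithin_le hd
      (fun s hs => (abs_pendulumAccel_le g u s _).trans (hC s hs)) h0I ht
    simp only [hp0, sub_zero, Real.norm_eq_abs] at hmvt
    have hCt : C * |t| ≤ C * |r| := mul_le_mul_of_nonneg_left (abs_le.2 ht) (by positivity)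
    linarith [abs_sub_abs_le_abs_sub (p t).2 x₀.2]
  refine ⟨p, hp0, fun t ht => ?_⟩
  have htI : t ∈ Ioo (-|r|) |r| :=
    ⟨by linarith [ht.1, le_abs_self r], by linarith [ht.2, le_abs_self r]⟩
  rw [← clampedPendulumField_eq (hvel t (Ioo_subset_Icc_self htI))]
  exact (hp t (Ioo_subset_Icc_self htI)).hasDerivAt (Icc_mem_nhds htI.1 htI.2)

theorem exists_pendulumField_solution (hu : Continuous u) (x₀ : ℝ × ℝ) :
    ∃ p : ℝ → ℝ × ℝ, p 0 = x₀ ∧ ∀ t, HasDerivAt p (pendulumField g u t (p t)) t :=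
  exists_forall_hasDerivAt_of_forall_Ioo
    (fun r => (exists_lipschitzWith_pendulumField hu (-r) r).imp
      fun _ hK t ht => hK t (Ioo_subset_Icc_self ht))
    (exists_pendulumField_solution_Ioo hu x₀)

namespace IsPendulumSolution

variable {α : ℝ → ℝ}

lemma continuous (h : IsPendulumSolution g u α) : Continuous α :=
  h.1.continuous

lemma hasDerivAt (h : IsPendulumSolution g u α) (t : ℝ) : HasDerivAt α (deriv α t) t :=
  (h.1.differentiable two_ne_zero t).hasDerivAt

lemma hasDerivAt_deriv (h : IsPendulumSolution g u α) (t : ℝ) :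
    HasDerivAt (deriv α) (pendulumAccel g u t (α t)) t := by
  have h1 : ContDiff ℝ 1 (deriv α) := (contDiff_succ_iff_deriv.1 (h.1 : ContDiff ℝ (1 + 1) α)).2.2
  have := (h1.differentiable one_ne_zero t).hasDerivAt
  rwa [h.2 t] at this

lemma reflect (h : IsPendulumSolution g u α) :
    IsPendulumSolution g (fun t => -u t) (fun t => π - α t) := by
  refine ⟨contDiff_const.sub h.1, fun t => ?_⟩
  have hd : deriv (fun t => π - α t) = fun t => -deriv α t := funext fun t => deriv_const_sub π
  rw [hd, deriv.fun_neg, h.2 t, cos_pi_sub, sin_pi_sub]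
  ring

end IsPendulumSolution

lemma isPendulumSolution_of_hasDerivAt (hu : Continuous u) {α α' : ℝ → ℝ}
    (hα : ∀ t, HasDerivAt α (α' t) t) (hα' : ∀ t, HasDerivAt α' (pendulumAccel g u t (α t)) t) :
    IsPendulumSolution g u α := by
  have hd : deriv α = α' := funext fun t => (hα t).deriv
  have hd' : deriv α' = fun t => pendulumAccel g u t (α t) := funext fun t => (hα' t).deriv
  refine ⟨?_, fun t => by rw [hd, hd']; rfl⟩
  rw [show (2 : WithTop ℕ∞) = 1 + 1 by norm_num, contDiff_succ_iff_deriv, hd,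
    contDiff_one_iff_deriv, hd']
  refine ⟨fun t => (hα t).differentiableAt, by simp, fun t => (hα' t).differentiableAt, ?_⟩
  have hc : Continuous α := continuous_iff_continuousAt.2 fun t => (hα t).continuousAt
  unfold pendulumAccel
  fun_prop

theorem exists_pendulum_flow (hu : Continuous u) (T : ℝ) :
    ∃ X : ℝ → ℝ → ℝ, (∀ φ, IsPendulumSolution g u (X φ)) ∧ (∀ φ, X φ 0 = φ) ∧
      (∀ φ, deriv (X φ) 0 = 0) ∧ ∃ c, ∀ t ∈ Icc 0 T, LipschitzWith c (X · t) := by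
  choose P hP0 hP using fun φ : ℝ => exists_pendulumField_solution (g := g) hu (φ, 0)
  have hfst : ∀ φ t, HasDerivAt (fun s => (P φ s).1) (P φ t).2 t := fun φ t =>
    (hasFDerivAt_fst (𝕜 := ℝ) (E := ℝ) (F := ℝ)).comp_hasDerivAt t (hP φ t)
  have hsnd : ∀ φ t, HasDerivAt (fun s => (P φ s).2) (pendulumAccel g u t (P φ t).1) t :=
    fun φ t => (hasFDerivAt_snd (𝕜 := ℝ) (E := ℝ) (F := ℝ)).comp_hasDerivAt t (hP φ t)
  refine ⟨fun φ t => (P φ t).1, fun φ => isPendulumSolution_of_hasDerivAt hu (hfst φ) (hsnd φ),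
    fun φ => by simp [hP0], fun φ => by simp [(hfst φ 0).deriv, hP0], ?_⟩
  obtain ⟨K, hK⟩ := exists_lipschitzWith_pendulumField (g := g) hu 0 T
  refine ⟨⟨exp (K * T), (exp_pos _).le⟩, fun t ht => LipschitzWith.of_dist_le_mul fun φ ψ => ?_⟩
  have hgron := dist_le_of_trajectories_ODE_of_mem (s := fun _ => univ)
    (fun s hs => (hK s (Ico_subset_Icc_self hs)).lipschitzOnWith)
    (fun s _ => (hP φ s).continuousAt.continuousWithinAt)
    (fun s _ => (hP φ s).hasDerivWithinAt) (fun _ _ => trivial)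
    (fun s _ => (hP ψ s).continuousAt.continuousWithinAt)
    (fun s _ => (hP ψ s).hasDerivWithinAt) (fun _ _ => trivial) le_rfl t ht
  calc dist (P φ t).1 (P ψ t).1 ≤ dist (P φ t) (P ψ t) := by
        rw [Prod.dist_eq]; exact le_max_left _ _
    _ ≤ dist φ ψ * exp (K * (t - 0)) := by simpa [hP0, Prod.dist_eq] using hgron
    _ ≤ exp (K * T) * dist φ ψ := by
        rw [mul_comm, sub_zero]; gcongr; exact ht.2

section Solutions

variable {v x : ℝ → ℝ} {T y σ : ℝ}

lemma IsPendulumSolution.exitsLow_of_eq_zero (hg : 0 < g) (hx : IsPendulumSolution g v x)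
    (hσ : σ ∈ Ioc 0 T) (hzero : x σ = 0) (hbelow : ∀ s ∈ Icc 0 σ, x s < π) (hy : 0 < y) :
    ExitsLow T y x := by
  rcases hσ.2.eq_or_lt with rfl | hσT
  · exact ⟨σ, ⟨hσ.1.le, le_rfl⟩, Or.inr ⟨rfl, hzero ▸ hy⟩, hbelow⟩
  have hacc : HasDerivAt (deriv x) (-g) σ := by
    simpa [pendulumAccel, hzero] using hx.hasDerivAt_deriv σ
  obtain ⟨ε, hε, hnear⟩ := Metric.eventually_nhds_iff.1
    (hx.continuous.continuousAt.eventually (gt_mem_nhds (hzero ▸ pi_pos : x σ < π)))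
  obtain ⟨t, hneg, ht, htε⟩ := ((frequently_neg_of_eq_zero hx.hasDerivAt hacc (neg_lt_zero.2 hg)
    hzero).and_eventually (Filter.Eventually.and
      (Ioo_mem_nhds hσ.1 hσT) (Metric.ball_mem_nhds σ hε))).exists
  refine ⟨t, Ioo_subset_Icc_self ht, Or.inl hneg, fun s hs => ?_⟩
  rcases le_total s σ with hsσ | hσs
  · exact hbelow s ⟨hs.1, hsσ⟩
  · refine hnear ?_
    rw [Real.dist_eq] at htε
    rw [Real.dist_eq, abs_of_nonneg (sub_nonneg.2 hσs)]
    exact (sub_le_sub_right hs.2 σ).trans_lt ((le_abs_self _).trans_lt htε)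

lemma IsPendulumSolution.exitsLow_or_exitsHigh_or_mapsTo (hg : 0 < g)
    (hx : IsPendulumSolution g v x) (hT : 0 ≤ T) (h0 : x 0 ∈ Ioo 0 π) (hy : y ∈ Ioo 0 π) :
    ExitsLow T y x ∨ ExitsHigh T y x ∨ (∀ t ∈ Icc 0 T, x t ∈ Ioo 0 π) ∧ x T = y := by
  rcases exists_first_exit_Ioo hx.continuous T h0 with hstay | ⟨σ, hσ, hσx, hbefore⟩
  · have hfinal := fun s hs => (hstay s hs).2
    rcases lt_trichotomy (x T) y with hlt | heq | hgt
    · exact Or.inl ⟨T, right_mem_Icc.2 hT, Or.inr ⟨rfl, hlt⟩, hfinal⟩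
    · exact Or.inr (Or.inr ⟨hstay, heq⟩)
    · refine Or.inr (Or.inl ⟨T, right_mem_Icc.2 hT, Or.inr ⟨rfl, by linarith⟩, fun s hs => ?_⟩)
      linarith [(hstay s hs).1]
  have hupto : ∀ s ∈ Icc 0 σ, s < σ → x s ∈ Ioo 0 π := fun s hs hsσ => hbefore s ⟨hs.1, hsσ⟩
  rcases hσx with hzero | hpi
  · refine Or.inl (hx.exitsLow_of_eq_zero hg hσ hzero (fun s hs => ?_) hy.1)
    rcases hs.2.lt_or_eq with hsσ | rfl
    exacts [(hupto s hs hsσ).2, hzero ▸ pi_pos]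
  · refine Or.inr (Or.inl (hx.reflect.exitsLow_of_eq_zero hg hσ (by simp [hpi]) (fun s hs => ?_)
      (by linarith [hy.2])))
    rcases hs.2.lt_or_eq with hsσ | rfl
    exacts [by linarith [(hupto s hs hsσ).1], by simp [hpi, pi_pos]]

lemma pendulumAccel_le_of_near_floor {M t θ : ℝ} (hg : 0 ≤ g) (hv : |v t| ≤ M)
    (hθ : θ ∈ Icc 0 1) (hMθ : M * θ ≤ g / 4) : pendulumAccel g v t θ ≤ -(g / 4) := by
  have hcos : 1 / 2 ≤ cos θ := by nlinarith [one_sub_sq_div_two_le_cos (x := θ), hθ.1, hθ.2]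
  have hsin0 : 0 ≤ sin θ := sin_nonneg_of_nonneg_of_le_pi hθ.1 (by linarith [hθ.2, pi_gt_three])
  have hvsin : v t * sin θ ≤ M * θ :=
    calc v t * sin θ ≤ |v t| * sin θ := mul_le_mul_of_nonneg_right (le_abs_self _) hsin0
      _ ≤ M * θ := mul_le_mul hv (sin_le hθ.1) hsin0 ((abs_nonneg _).trans hv)
  unfold pendulumAccel
  nlinarith

lemma exists_forall_exitsLow_of_small (hg : 0 < g) (hT : 0 < T) (M : ℝ≥0) :
    ∃ ε > 0, ∀ v x : ℝ → ℝ, (∀ t ∈ Icc 0 T, |v t| ≤ M) → IsPendulumSolution g v x →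
      deriv x 0 = 0 → x 0 ∈ Ioc 0 ε → ∀ y > 0, ExitsLow T y x := by
  set d := min 1 (g / (4 * (M + 1)))
  have hd : 0 < d := lt_min one_pos (by positivity)
  have hMd : M * d ≤ g / 4 := by
    calc M * d ≤ (M + 1) * (g / (4 * (M + 1))) :=
          mul_le_mul (by linarith) (min_le_right _ _) hd.le (by positivity)
      _ = g / 4 := by field_simp
  refine ⟨min (d / 2) (g * T ^ 2 / 16), by positivity, fun v x hvM hx hx0 hsmall y hy => ?_⟩
  have hsmall_d : x 0 ≤ d / 2 := hsmall.2.trans (min_le_left _ _)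
  have hsmall_T : x 0 ≤ g * T ^ 2 / 16 := hsmall.2.trans (min_le_right _ _)
  have hfall : ∀ σ ∈ Icc 0 T, (∀ t ∈ Ico 0 σ, x t ∈ Ioo 0 d) → x σ ≤ x 0 - g / 4 * σ ^ 2 / 2 :=
    fun σ hσ hlow => le_sub_of_deriv_deriv_le hx.hasDerivAt hx.hasDerivAt_deriv hx0 hσ.1
      fun t ht => pendulumAccel_le_of_near_floor hg.le (hvM t ⟨ht.1, ht.2.le.trans hσ.2⟩)
        ⟨(hlow t ht).1.le, (hlow t ht).2.le.trans (min_le_left _ _)⟩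
        ((mul_le_mul_of_nonneg_left (hlow t ht).2.le M.2).trans hMd)
  rcases exists_first_exit_Ioo (a := 0) (b := d) hx.continuous T ⟨hsmall.1, by linarith⟩ with
    hstay | ⟨σ, hσ, hzero | hceil, hlow⟩
  · have := hfall T ⟨hT.le, le_rfl⟩ fun t ht => hstay t (Ico_subset_Icc_self ht)
    nlinarith [(hstay T ⟨hT.le, le_rfl⟩).1]
  · refine hx.exitsLow_of_eq_zero hg hσ hzero (fun s hs => ?_) hy
    rcases hs.2.lt_or_eq with hsσ | rfl
    · linarith [(hlow s ⟨hs.1, hsσ⟩).2, min_le_left 1 (g / (4 * (M + 1))), pi_gt_three]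
    · linarith [pi_pos]
  · have := hfall σ ⟨hσ.1.le, hσ.2⟩ hlow
    nlinarith

end Solutions

end Pendulum

/-- Prescribed final position: for every `T > 0` and every `y ∈ (0, π)` there
is an initial angle from which the rod, released at rest, stays strictly above
the floor during `[0, T]` and occupies exactly the position `y` at time `T`. -/
theorem whitney_prescribed_final_position (g : ℝ) (hg : 0 < g)
    (u : ℝ → ℝ) (hu : Continuous u) (T : ℝ) (hT : 0 < T)
    (y : ℝ) (hy : y ∈ Set.Ioo (0 : ℝ) Real.pi) :
    ∃ φ ∈ Set.Ioo (0 : ℝ) Real.pi, ∃ α : ℝ → ℝ,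
      IsPendulumSolution g u α ∧ α 0 = φ ∧ deriv α 0 = 0 ∧
        (∀ t ∈ Set.Icc (0 : ℝ) T, α t ∈ Set.Ioo (0 : ℝ) Real.pi) ∧ α T = y := by
  obtain ⟨X, hsol, hX0, hXd0, c, hc⟩ := exists_pendulum_flow (g := g) hu T
  have hXc : ∀ φ, Continuous (X φ) := fun φ => (hsol φ).continuous
  obtain ⟨M, hM⟩ := exists_nnnorm_le_of_continuous hu 0 T
  have huM : ∀ t ∈ Icc 0 T, |u t| ≤ M := fun t ht => by exact_mod_cast hM t ht
  obtain ⟨ε, hε, hsmall⟩ := exists_forall_exitsLow_of_small hg hT M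
  set φ₀ := min ε 1
  have hφ₀ : φ₀ ∈ Ioc 0 ε := ⟨lt_min hε one_pos, min_le_left _ _⟩
  have hφ₀π : φ₀ ≤ π - φ₀ := by linarith [min_le_right ε 1, pi_gt_three]
  have hlow : ExitsLow T y (X φ₀) :=
    hsmall u _ huM (hsol φ₀) (hXd0 φ₀) (by rwa [hX0]) y hy.1
  have hhigh : ExitsHigh T y (X (π - φ₀)) :=
    hsmall (fun t => -u t) _ (by simpa using huM) (hsol _).reflect (by simp [hXd0])
      (by simpa [hX0] using hφ₀) (π - y) (by linarith [hy.2])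
  obtain ⟨φ, hφ, hnot_low, hnot_high⟩ :=
    exists_mem_Icc_not_exitsLow_not_exitsHigh hXc hc hφ₀π hlow hhigh
  have hφπ : φ ∈ Ioo 0 π := ⟨hφ₀.1.trans_le hφ.1, hφ.2.trans_lt (by linarith [hφ₀.1])⟩
  rcases (hsol φ).exitsLow_or_exitsHigh_or_mapsTo hg hT.le (by rwa [hX0]) hy with
    h | h | ⟨hstay, hend⟩
  · exact absurd h hnot_low
  · exact absurd h hnot_high
  · exact ⟨φ, hφπ, X φ, hsol φ, hX0 φ, hXd0 φ, hstay, hend⟩
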